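/- Let Σ be an r-dimensional complete fan in ℝ^r such that for every cone δ ∈ Σ of dimension r-2 the star fan Star(δ) is centrally symmetric. Then Σ is strongly symmetric, i.e., for every τ ∈ Σ(r-1) the span of τ is contained in the support of Σ(r-1). -/

import Mathlib

open scoped Classical Pointwise BigOperators

noncomputable section

abbrev Vr (r : ℕ) : Type := Fin r → ℝ

/-- The convex cone generated by a finite set of vectors. -/
def coneGen {M : Type*} [AddCommGroup M] [Module ℝ M] (s : Finset M) : Set M :=
  { x | ∃ c : M → ℝ, (∀ v, 0 ≤ c v) ∧ x = ∑ v ∈ s, c v • v }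

/-- Dimension of the linear span of a set. -/
def spanDim {M : Type*} [AddCommGroup M] [Module ℝ M] (s : Set M) : ℕ :=
  Module.finrank ℝ (Submodule.span ℝ s)

/-- A (linear) hyperplane: the kernel of a nonzero linear functional. -/
def IsHyp {M : Type*} [AddCommGroup M] [Module ℝ M] (H : Set M) : Prop :=
  ∃ f : M →ₗ[ℝ] ℝ, f ≠ 0 ∧ H = {x | f x = 0}

/-- A strongly convex rational polyhedral cone with respect to the lattice `N`. -/
def IsNCone {r : ℕ} (N : AddSubgroup (Vr r)) (σ : Set (Vr r)) : Prop :=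
  ∃ s : Finset (Vr r), ↑s ⊆ (N : Set (Vr r)) ∧ σ = coneGen s ∧ σ ∩ (-σ) ⊆ {0}

/-- `τ` is a face of `σ`. -/
def IsFaceOf {M : Type*} [AddCommGroup M] [Module ℝ M] (τ σ : Set M) : Prop :=
  ∃ m : M →ₗ[ℝ] ℝ, (∀ x ∈ σ, 0 ≤ m x) ∧ τ = σ ∩ {x | m x = 0}

/-- A fan in the lattice `N`. -/
structure IsFan {r : ℕ} (N : AddSubgroup (Vr r)) (F : Set (Set (Vr r))) : Prop where
  finite : F.Finite
  nonempty : F.Nonempty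
  cones : ∀ σ ∈ F, IsNCone N σ
  faces : ∀ σ ∈ F, ∀ τ : Set (Vr r), IsFaceOf τ σ → τ ∈ F
  inter : ∀ σ₁ ∈ F, ∀ σ₂ ∈ F, IsFaceOf (σ₁ ∩ σ₂) σ₁ ∧ IsFaceOf (σ₁ ∩ σ₂) σ₂

/-- Completeness: the support is everything. -/
def FanComplete {M : Type*} (F : Set (Set M)) : Prop := ⋃₀ F = Set.univ

/-- Strong symmetry: complete, and the support of the codimension-one cones is a
finite union of hyperplanes. -/
def SSymm {M : Type*} [AddCommGroup M] [Module ℝ M] (F : Set (Set M)) : Prop :=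
  FanComplete F ∧ ∃ Hs : Finset (Set M), (∀ h ∈ Hs, IsHyp h) ∧
    ⋃₀ {τ ∈ F | spanDim τ = Module.finrank ℝ M - 1} = ⋃₀ ↑Hs

/-- Central symmetry. -/
def CSymm {M : Type*} [AddCommGroup M] (F : Set (Set M)) : Prop := ∀ σ ∈ F, -σ ∈ F

/-- `b` is a ℤ-basis of the subgroup `L` of `ℝ^r`. -/
def IsZBasis {r d : ℕ} (L : AddSubgroup (Vr r)) (b : Fin d → Vr r) : Prop :=
  LinearIndependent ℝ b ∧ AddSubgroup.closure (Set.range b) = L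

/-- A (full-rank) lattice in `ℝ^r`. -/
def IsLattice {r : ℕ} (N : AddSubgroup (Vr r)) : Prop :=
  ∃ b : Fin r → Vr r, IsZBasis N b

/-- A cone generated by a part of a ℤ-basis of `L`. -/
def SmoothCone {r : ℕ} (L : AddSubgroup (Vr r)) (σ : Set (Vr r)) : Prop :=
  ∃ (d : ℕ) (b : Fin d → Vr r) (s : Finset (Fin d)),
    IsZBasis L b ∧ σ = coneGen (s.image b)

/-- Chambers of an arrangement: connected components of the complement. -/
def chambers {r : ℕ} (A : Finset (Set (Vr r))) : Set (Set (Vr r)) :=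
  { K | ∃ x ∈ (⋃₀ (A : Set (Set (Vr r))))ᶜ,
      K = connectedComponentIn (⋃₀ (A : Set (Set (Vr r))))ᶜ x }

/-- An open simplicial cone of full dimension. -/
def IsOpenSimplicialCone {r : ℕ} (K : Set (Vr r)) : Prop :=
  ∃ b : Fin r → Vr r, LinearIndependent ℝ b ∧
    K = { x | ∃ c : Fin r → ℝ, (∀ i, 0 < c i) ∧ x = ∑ i, c i • b i }

def ker0 {r : ℕ} (α : Vr r →ₗ[ℝ] ℝ) : Set (Vr r) := {x | α x = 0}

/-- Walls of a chamber `K`. -/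
def walls {r : ℕ} (A : Finset (Set (Vr r))) (K : Set (Vr r)) : Set (Set (Vr r)) :=
  { H | H ∈ A ∧ spanDim (H ∩ closure K) = r - 1 }

/-- The set `B^K` of inward-pointing normals of the walls of `K`. -/
def BK {r : ℕ} (A : Finset (Set (Vr r))) (R : Finset (Vr r →ₗ[ℝ] ℝ)) (K : Set (Vr r)) :
    Finset (Vr r →ₗ[ℝ] ℝ) :=
  R.filter (fun α => ker0 α ∈ walls A K ∧ K ⊆ {x | 0 ≤ α x})

/-- A crystallographic arrangement `(A, R)`. -/
structure IsCrystArr {r : ℕ} (A : Finset (Set (Vr r))) (R : Finset (Vr r →ₗ[ℝ] ℝ)) : Prop where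
  simplicial : ∀ K ∈ chambers A, IsOpenSimplicialCone K
  hyps : (A : Set (Set (Vr r))) = (fun α => ker0 α) '' (R : Set (Vr r →ₗ[ℝ] ℝ))
  nonzero : ∀ α ∈ R, α ≠ 0
  neg_mem : ∀ α ∈ R, -α ∈ R
  reduced : ∀ α ∈ R, ∀ β ∈ R, (∃ c : ℝ, β = c • α) → β = α ∨ β = -α
  integral : ∀ K ∈ chambers A, ∀ β ∈ R,
    β ∈ Submodule.span ℤ ((BK A R K : Set (Vr r →ₗ[ℝ] ℝ)))

/-- The set of all intersections of closed chambers of `A`. -/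
def closedChamberInts {r : ℕ} (A : Finset (Set (Vr r))) : Set (Set (Vr r)) :=
  { σ | ∃ S : Set (Set (Vr r)), S.Nonempty ∧ S ⊆ chambers A ∧ σ = ⋂₀ (closure '' S) }

/-- The lattice dual to `M_R = ∑_{α ∈ R} ℤ α`. -/
def dualLattice {r : ℕ} (R : Finset (Vr r →ₗ[ℝ] ℝ)) : AddSubgroup (Vr r) where
  carrier := { x | ∀ α ∈ R, ∃ k : ℤ, α x = k }
  zero_mem' := fun α _ => ⟨0, by simp⟩
  add_mem' := by
    intro x y hx hy α hα
    obtain ⟨k, hk⟩ := hx α hα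
    obtain ⟨m, hm⟩ := hy α hα
    exact ⟨k + m, by simp [hk, hm]⟩
  neg_mem' := by
    intro x hx α hα
    obtain ⟨k, hk⟩ := hx α hα
    exact ⟨-k, by simp [hk]⟩

/-- The star fan of `δ`, as a collection of cones in the quotient by `E`. -/
def starAt {r : ℕ} (F : Set (Set (Vr r))) (δ : Set (Vr r)) (E : Submodule ℝ (Vr r)) :
    Set (Set (Vr r ⧸ E)) :=
  { τ | ∃ σ ∈ F, δ ⊆ σ ∧ τ = E.mkQ '' σ }

/-- The positive roots `R_+^K` at the chamber `K`. -/
def RplusF {r : ℕ} (A : Finset (Set (Vr r))) (R : Finset (Vr r →ₗ[ℝ] ℝ)) (K : Set (Vr r)) :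
    Finset (Vr r →ₗ[ℝ] ℝ) :=
  R.filter (fun α => α ∈ coneGen (BK A R K))

/-- `ρ^K`, the half-sum of the positive roots at `K`. -/
def rhoK {r : ℕ} (A : Finset (Set (Vr r))) (R : Finset (Vr r →ₗ[ℝ] ℝ)) (K : Set (Vr r)) :
    Vr r →ₗ[ℝ] ℝ :=
  (1/2 : ℝ) • ∑ α ∈ RplusF A R K, α

end

/-!
Let `H` be the span of an `(r-1)`-dimensional cone `τ`, and `U` the union of the cones of the fan
spanning `H`; it is a closed subset of `H`. A point `y ∈ U` lies in the relative interior of a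
face `δ` of a cone spanning `H`. If `δ` spans `H`, then `U` is a neighbourhood of `y` in `H`. If
`span δ` is a hyperplane of `H`, central symmetry of `Star(δ)` yields a cone on the other side of
`span δ`, again spanning `H`, and `U` is again a neighbourhood of `y` in `H`. So `U` is open in
`H` away from the spans of the lower-dimensional cones, subspaces of codimension at least two in
`H`; their complement in `H` is connected and dense, hence `U = H`.
-/

open Submodule Module Set Topology Filter

section ConeGen

variable {M : Type*} [AddCommGroup M] [Module ℝ M]

lemma zero_mem_coneGen (s : Finset M) : (0 : M) ∈ coneGen s :=
  ⟨0, fun _ => le_rfl, by simp⟩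

lemma add_mem_coneGen {s : Finset M} {x y : M} (hx : x ∈ coneGen s) (hy : y ∈ coneGen s) :
    x + y ∈ coneGen s := by
  obtain ⟨c, hc, rfl⟩ := hx
  obtain ⟨d, hd, rfl⟩ := hy
  exact ⟨c + d, fun v => add_nonneg (hc v) (hd v), by simp [add_smul, Finset.sum_add_distrib]⟩

lemma smul_mem_coneGen {s : Finset M} {x : M} {t : ℝ} (ht : 0 ≤ t) (hx : x ∈ coneGen s) :
    t • x ∈ coneGen s := by
  obtain ⟨c, hc, rfl⟩ := hx
  exact ⟨t • c, fun v => mul_nonneg ht (hc v), by simp [Finset.smul_sum, smul_smul]⟩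

lemma convex_coneGen (s : Finset M) : Convex ℝ (coneGen s) := fun _ hx _ hy _ _ ha hb _ =>
  add_mem_coneGen (smul_mem_coneGen ha hx) (smul_mem_coneGen hb hy)

lemma coneGen_mono {s t : Finset M} (hst : s ⊆ t) : coneGen s ⊆ coneGen t := by
  rintro x ⟨c, hc, rfl⟩
  refine ⟨fun v => if v ∈ s then c v else 0, fun v => by dsimp only; split_ifs <;> simp [hc], ?_⟩
  rw [← Finset.sum_subset hst (fun v _ hv => by simp [hv])]
  exact Finset.sum_congr rfl fun v hv => by simp [hv]

lemma coneGen_eq_image_linearCombination (s : Finset M) :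
    coneGen s = Fintype.linearCombination ℝ (fun v : s => (v : M)) '' Ici 0 := by
  ext x
  simp only [Fintype.linearCombination_apply, mem_image, mem_Ici]
  constructor
  · rintro ⟨c, hc, rfl⟩
    exact ⟨fun v => c v, fun v => hc v, (Finset.sum_attach s fun v => c v • v).symm ▸ rfl⟩
  · rintro ⟨c, hc, rfl⟩
    refine ⟨fun v => if h : v ∈ s then c ⟨v, h⟩ else 0, fun v => ?_, ?_⟩
    · dsimp only
      split_ifs
      exacts [hc _, le_rfl]
    · rw [← Finset.sum_attach s]
      simp

/-- Carathéodory's reduction step: a linear dependence among the generators can be subtracted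
from the coefficients until one of them vanishes. -/
lemma exists_mem_coneGen_erase {s : Finset M} {x : M} (hx : x ∈ coneGen s)
    (hs : ¬ LinearIndepOn ℝ id (s : Set M)) : ∃ v ∈ s, x ∈ coneGen (s.erase v) := by
  obtain ⟨c, hc, rfl⟩ := hx
  obtain ⟨g, hg, hpos⟩ : ∃ g : M → ℝ, ∑ v ∈ s, g v • v = 0 ∧ ∃ v ∈ s, 0 < g v := by
    obtain ⟨g, hg, v, hv, hgv⟩ := not_linearIndepOn_finset_iff.1 hs
    rcases hgv.lt_or_gt with hneg | hpos
    · exact ⟨-g, by simpa using hg, v, hv, by simpa using hneg⟩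
    · exact ⟨g, by simpa using hg, v, hv, hpos⟩
  obtain ⟨v₀, hv₀, hmin⟩ := (s.filter (0 < g ·)).exists_min_image (fun v => c v / g v)
    (by simpa [Finset.Nonempty] using hpos)
  rw [Finset.mem_filter] at hv₀
  set μ := c v₀ / g v₀
  have hμ : 0 ≤ μ := div_nonneg (hc v₀) hv₀.2.le
  have hle : ∀ v ∈ s, μ * g v ≤ c v := by
    intro v hv
    rcases le_or_gt (g v) 0 with hgv | hgv
    · nlinarith [hc v]
    · have := hmin v (Finset.mem_filter.2 ⟨hv, hgv⟩)
      rwa [le_div_iff₀ hgv] at this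
  refine ⟨v₀, hv₀.1, fun v => max (c v - μ * g v) 0, fun v => le_max_right _ _, ?_⟩
  have hv₀0 : c v₀ - μ * g v₀ = 0 := by simp [μ, div_mul_cancel₀ _ hv₀.2.ne']
  calc ∑ v ∈ s, c v • v = ∑ v ∈ s, (c v - μ * g v) • v := by
        simp [sub_smul, Finset.sum_sub_distrib, mul_smul, ← Finset.smul_sum, hg]
    _ = ∑ v ∈ s.erase v₀, (c v - μ * g v) • v := by
        rw [← Finset.add_sum_erase s _ hv₀.1, hv₀0, zero_smul, zero_add]
    _ = _ := Finset.sum_congr rfl fun v hv => by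
        dsimp only
        rw [max_eq_left (sub_nonneg.2 (hle v (Finset.mem_of_mem_erase hv)))]

lemma exists_linearIndepOn_subset_mem_coneGen (s : Finset M) {x : M} (hx : x ∈ coneGen s) :
    ∃ t ⊆ s, LinearIndepOn ℝ id (t : Set M) ∧ x ∈ coneGen t := by
  induction s using Finset.strongInduction with
  | _ s ih =>
    by_cases hs : LinearIndepOn ℝ id (s : Set M)
    · exact ⟨s, subset_rfl, hs, hx⟩
    · obtain ⟨v, hv, hxv⟩ := exists_mem_coneGen_erase hx hs
      obtain ⟨t, hts, ht, hxt⟩ := ih _ (Finset.erase_ssubset hv) hxv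
      exact ⟨t, hts.trans (Finset.erase_subset v s), ht, hxt⟩

end ConeGen

section Closed

variable {E : Type*} [NormedAddCommGroup E] [NormedSpace ℝ E]

lemma isClosed_coneGen_of_linearIndepOn {t : Finset E} (ht : LinearIndepOn ℝ id (t : Set E)) :
    IsClosed (coneGen t) := by
  rw [coneGen_eq_image_linearCombination]
  have hinj : LinearMap.ker (Fintype.linearCombination ℝ (fun v : t => (v : E))) = ⊥ :=
    LinearMap.ker_eq_bot.2 (linearIndependent_iff_injective_fintypeLinearCombination.1 ht)
  exact (LinearMap.isClosedEmbedding_of_injective hinj).isClosedMap _ isClosed_Ici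

lemma isClosed_coneGen (s : Finset E) : IsClosed (coneGen s) := by
  have : coneGen s = ⋃ t ∈ {t | t ⊆ s ∧ LinearIndepOn ℝ id (t : Set E)}, coneGen t := by
    refine (Subset.antisymm (fun x hx => ?_) (iUnion₂_subset fun t ht => coneGen_mono ht.1))
    obtain ⟨t, hts, ht, hxt⟩ := exists_linearIndepOn_subset_mem_coneGen s hx
    exact mem_biUnion ⟨hts, ht⟩ hxt
  rw [this]
  exact (s.powerset.finite_toSet.subset fun t ht => Finset.mem_powerset.2 ht.1).isClosed_biUnion
    fun t ht => isClosed_coneGen_of_linearIndepOn ht.2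

end Closed

section Relint

variable {E : Type*} [NormedAddCommGroup E] [NormedSpace ℝ E]

/-- Relative interior with respect to the linear span; for the cones below, which contain `0`,
the linear span is the affine span. -/
def Relint (C : Set E) : Set E :=
  {x | x ∈ C ∧ ∃ ε > 0, ∀ z ∈ (span ℝ C : Set E), dist z x < ε → z ∈ C}

lemma relint_subset (C : Set E) : Relint C ⊆ C := fun _ h => h.1

lemma Convex.combo_relint_self_mem_relint {C : Set E} (hC : Convex ℝ C) {p x : E}
    (hp : p ∈ Relint C) (hx : x ∈ C) {a b : ℝ} (ha : 0 < a) (hb : 0 ≤ b) (hab : a + b = 1) :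
    a • p + b • x ∈ Relint C := by
  obtain ⟨hpC, ε, hε, hball⟩ := hp
  refine ⟨hC hpC hx ha.le hb hab, a * ε, by positivity, fun z hz hzd => ?_⟩
  set w := a⁻¹ • (z - (a • p + b • x))
  have hw : p + w ∈ C := by
    refine hball _ (add_mem (subset_span hpC) (smul_mem _ _ (sub_mem hz (add_mem
      (smul_mem _ _ (subset_span hpC)) (smul_mem _ _ (subset_span hx)))))) ?_
    rwa [dist_eq_norm, add_sub_cancel_left, norm_smul, Real.norm_eq_abs, abs_inv, abs_of_pos ha,
      inv_mul_lt_iff₀ ha, ← dist_eq_norm]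
  have hz' : z = a • (p + w) + b • x := by
    simp only [w, smul_add, smul_smul, mul_inv_cancel₀ ha.ne', one_smul]
    abel
  rw [hz']
  exact hC hw hx ha.le hb hab

lemma Convex.relint {C : Set E} (hC : Convex ℝ C) : Convex ℝ (Relint C) := by
  intro x hx y hy a b ha hb hab
  rcases ha.eq_or_lt with rfl | ha
  · rw [zero_add] at hab
    simpa [hab] using hy
  · exact hC.combo_relint_self_mem_relint hx (relint_subset C hy) ha hb hab

lemma isOpen_subtype_preimage_relint (C : Set E) :
    IsOpen (((↑) : span ℝ C → E) ⁻¹' Relint C) := by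
  refine Metric.isOpen_iff.2 fun x ⟨_, ε, hε, hball⟩ => ⟨ε, hε, fun x' hx' => ?_⟩
  have hx' : dist (x' : E) x < ε := hx'
  refine ⟨hball _ x'.2 hx', ε - dist (x' : E) x, sub_pos.2 hx', fun z hz hzx' => ?_⟩
  exact hball z hz (by linarith [dist_triangle z x' x])

lemma Convex.relint_nonempty [FiniteDimensional ℝ E] {C : Set E} (hC : Convex ℝ C)
    (h0 : (0 : E) ∈ C) : (Relint C).Nonempty := by
  obtain ⟨x, hx⟩ := Set.Nonempty.intrinsicInterior hC ⟨0, h0⟩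
  obtain ⟨y, hy, rfl⟩ := mem_intrinsicInterior.1 hx
  obtain ⟨ε, hε, hball⟩ := Metric.isOpen_iff.1 isOpen_interior y hy
  have hspan : (span ℝ C : Set E) = affineSpan ℝ C := by
    rw [← affineSpan_insert_zero, insert_eq_of_mem h0]
  refine ⟨y, interior_subset (s := Subtype.val ⁻¹' C) hy, ε, hε, fun z hz hzy => ?_⟩
  rw [hspan] at hz
  exact interior_subset (s := Subtype.val ⁻¹' C)
    (hball (show (⟨z, hz⟩ : affineSpan ℝ C) ∈ Metric.ball y ε from hzy))

end Relint

section SupportingFace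

variable {E : Type*} [NormedAddCommGroup E] [NormedSpace ℝ E] [FiniteDimensional ℝ E]

/-- Separate `y` from the relative interior, an open convex set in the span, and extend the
separating functional. -/
lemma exists_face_lt_of_notMem_relint {C : Set E} (hC : Convex ℝ C)
    (hsmul : ∀ x ∈ C, ∀ t : ℝ, 0 ≤ t → t • x ∈ C) {y : E} (hy : y ∈ C) (hrel : y ∉ Relint C) :
    ∃ m : E →ₗ[ℝ] ℝ, (∀ x ∈ C, 0 ≤ m x) ∧ m y = 0 ∧
      spanDim (C ∩ {x | m x = 0}) < spanDim C := by
  set W := span ℝ C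
  have hyW : y ∈ W := subset_span hy
  obtain ⟨f, hf⟩ := geometric_hahn_banach_open_point (hC.relint.linear_preimage W.subtype)
    (isOpen_subtype_preimage_relint C) (show (⟨y, hyW⟩ : W) ∉ _ from hrel)
  obtain ⟨m₀, hm₀⟩ := LinearMap.exists_extend (f : W →ₗ[ℝ] ℝ)
  have hm₀W : ∀ x (hx : x ∈ W), m₀ x = f ⟨x, hx⟩ := fun x hx => congr($hm₀ ⟨x, hx⟩)
  have hlt : ∀ a ∈ Relint C, m₀ a < m₀ y := fun a ha => by
    rw [hm₀W a (subset_span ha.1), hm₀W y hyW]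
    exact hf ⟨a, _⟩ ha
  obtain ⟨p, hp⟩ := hC.relint_nonempty (by simpa using hsmul y hy 0 le_rfl)
  have hle : ∀ x ∈ C, m₀ x ≤ m₀ y := by
    intro x hx
    have hlim : Tendsto (fun t : ℝ => t * m₀ p + (1 - t) * m₀ x) (𝓝[>] 0) (𝓝 (m₀ x)) := by
      have hcont : Continuous fun t : ℝ => t * m₀ p + (1 - t) * m₀ x := by fun_prop
      simpa using (hcont.tendsto 0).mono_left nhdsWithin_le_nhds
    refine le_of_tendsto hlim ?_
    filter_upwards [Ioo_mem_nhdsGT zero_lt_one] with t ht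
    have := hlt _
      (hC.combo_relint_self_mem_relint hp hx ht.1 (b := 1 - t) (by linarith [ht.2]) (by ring))
    simpa using this.le
  have hy0 : m₀ y = 0 := by
    have h0 := hle 0 (by simpa using hsmul y hy 0 le_rfl)
    have h2 := hle _ (hsmul y hy 2 zero_le_two)
    simp only [map_zero, map_smul, smul_eq_mul] at h0 h2
    linarith
  refine ⟨-m₀, fun x hx => by simpa [hy0] using hle x hx, by simp [hy0], ?_⟩
  have hp_notMem : p ∉ span ℝ (C ∩ {x | (-m₀) x = 0}) := by
    intro hmem
    have hker : span ℝ (C ∩ {x | (-m₀) x = 0}) ≤ LinearMap.ker m₀ :=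
      span_le.2 fun x hx => by simpa using hx.2
    have h := hlt p hp
    rw [LinearMap.mem_ker.1 (hker hmem), hy0] at h
    exact h.false
  exact finrank_lt_finrank_of_lt <| (span_mono inter_subset_left).lt_of_ne
    fun h => hp_notMem (h ▸ subset_span hp.1)

end SupportingFace

namespace IsFan

variable {r : ℕ} {N : AddSubgroup (Vr r)} {F : Set (Set (Vr r))}

lemma exists_eq_coneGen (hfan : IsFan N F) {σ : Set (Vr r)} (hσ : σ ∈ F) :
    ∃ s : Finset (Vr r), σ = coneGen s :=
  let ⟨s, _, hs, _⟩ := hfan.cones σ hσ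
  ⟨s, hs⟩

lemma isClosed (hfan : IsFan N F) {σ : Set (Vr r)} (hσ : σ ∈ F) : IsClosed σ := by
  obtain ⟨s, rfl⟩ := hfan.exists_eq_coneGen hσ
  exact isClosed_coneGen s

lemma relint_nonempty (hfan : IsFan N F) {σ : Set (Vr r)} (hσ : σ ∈ F) :
    (Relint σ).Nonempty := by
  obtain ⟨s, rfl⟩ := hfan.exists_eq_coneGen hσ
  exact (convex_coneGen s).relint_nonempty (zero_mem_coneGen s)

lemma add_smul_mem (hfan : IsFan N F) {σ : Set (Vr r)} (hσ : σ ∈ F) {x u : Vr r}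
    (hx : x ∈ σ) (hu : u ∈ σ) {t : ℝ} (ht : 0 ≤ t) : x + t • u ∈ σ := by
  obtain ⟨s, rfl⟩ := hfan.exists_eq_coneGen hσ
  exact add_mem_coneGen hx (smul_mem_coneGen ht hu)

lemma exists_mem_relint (hfan : IsFan N F) {γ : Set (Vr r)} (hγ : γ ∈ F) {y : Vr r}
    (hy : y ∈ γ) : ∃ δ ∈ F, δ ⊆ γ ∧ y ∈ Relint δ := by
  induction h : spanDim γ using Nat.strong_induction_on generalizing γ with
  | _ n ih =>
    by_cases hrel : y ∈ Relint γ
    · exact ⟨γ, hγ, subset_rfl, hrel⟩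
    obtain ⟨s, rfl⟩ := hfan.exists_eq_coneGen hγ
    obtain ⟨m, hm, hmy, hlt⟩ := exists_face_lt_of_notMem_relint (convex_coneGen s)
      (fun x hx t ht => smul_mem_coneGen ht hx) hy hrel
    obtain ⟨δ, hδ, hδγ, hyδ⟩ := ih _ (h ▸ hlt) (hfan.faces _ hγ _ ⟨m, hm, rfl⟩) ⟨hy, hmy⟩ rfl
    exact ⟨δ, hδ, hδγ.trans inter_subset_left, hyδ⟩

end IsFan

lemma IsPreconnected.subset_of_isClosed_of_forall_ball {X : Type*} [PseudoMetricSpace X]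
    {P U : Set X} (hP : IsPreconnected P) (hU : IsClosed U) (hne : (P ∩ U).Nonempty)
    (hloc : ∀ y ∈ P ∩ U, ∃ ε > 0, ∀ z ∈ P, dist z y < ε → z ∈ U) : P ⊆ U := by
  have := isPreconnected_iff_preconnectedSpace.1 hP
  have hclopen : IsClopen {x : P | (x : X) ∈ U} := by
    refine ⟨hU.preimage continuous_subtype_val, Metric.isOpen_iff.2 fun x hx => ?_⟩
    obtain ⟨ε, hε, hball⟩ := hloc x ⟨x.2, hx⟩
    exact ⟨ε, hε, fun z hz => hball z z.2 hz⟩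
  obtain ⟨y, hyP, hyU⟩ := hne
  exact fun x hx => eq_univ_iff_forall.1 (hclopen.eq_univ ⟨⟨y, hyP⟩, hyU⟩) ⟨x, hx⟩

section AvoidSubspaces

lemma segment_subset_sdiff_biUnion {V : Type*} [AddCommGroup V] [Module ℝ V]
    {H : Submodule ℝ V} {G : Set (Submodule ℝ V)} {u z : V}
    (hu : u ∈ (H : Set V) \ ⋃ W ∈ G, (W : Set V)) (hz : z ∈ H)
    (hzu : ∀ W ∈ G, z ∉ W ⊔ span ℝ {u}) :
    segment ℝ u z ⊆ (H : Set V) \ ⋃ W ∈ G, (W : Set V) := by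
  rintro _ ⟨a, b, ha, hb, hab, rfl⟩
  refine ⟨add_mem (smul_mem _ _ hu.1) (smul_mem _ _ hz), ?_⟩
  simp only [mem_iUnion, not_exists]
  intro W hW hmem
  rcases hb.eq_or_lt with rfl | hb
  · rw [add_zero] at hab
    exact hu.2 (mem_biUnion hW (by simpa [hab] using hmem))
  · have hbz : b • z ∈ W ⊔ span ℝ {u} := by
      simpa using sub_mem (mem_sup_left hmem)
        (mem_sup_right (smul_mem _ a (mem_span_singleton_self u)))
    exact hzu W hW ((smul_mem_iff _ hb.ne').1 hbz)

variable {E : Type*} [NormedAddCommGroup E] [NormedSpace ℝ E] [FiniteDimensional ℝ E]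

/-- Proper subspaces have empty interior, so finitely many of them leave a dense open set. -/
lemma subset_closure_sdiff_biUnion (H : Submodule ℝ E) {G : Set (Submodule ℝ E)}
    (hG : G.Finite) (hlt : ∀ W ∈ G, W < H) :
    (H : Set E) ⊆ closure ((H : Set E) \ ⋃ W ∈ G, (W : Set E)) := by
  have hdense : Dense (⋂ W ∈ G, ((W.comap H.subtype : Set H)ᶜ)) := by
    refine dense_biInter_of_isOpen (fun W _ => (closed_of_finiteDimensional _).isOpen_compl)
      hG.countable fun W hW => ?_
    rw [← interior_eq_empty_iff_dense_compl, ← not_nonempty_iff_eq_empty]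
    exact fun hne => (hlt W hW).not_ge (comap_subtype_eq_top.1 (eq_top_of_nonempty_interior' _ hne))
  intro y hy
  refine closure_mono ?_ (mem_closure_image continuous_subtype_val.continuousAt
    (hdense.closure_eq ▸ mem_univ (⟨y, hy⟩ : H)))
  rintro _ ⟨x, hx, rfl⟩
  simp only [mem_iInter, mem_compl_iff, SetLike.mem_coe] at hx
  exact ⟨x.2, by simpa using hx⟩

lemma sup_span_singleton_lt {W H : Submodule ℝ E} {u : E} (hWH : W ≤ H) (hu : u ∈ H)
    (hcodim : finrank ℝ W + 1 < finrank ℝ H) : W ⊔ span ℝ {u} < H := by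
  refine (sup_le hWH (span_le.2 (singleton_subset_iff.2 hu))).lt_of_ne fun h => ?_
  have h1 := finrank_add_le_finrank_add_finrank W (span ℝ {u})
  have h2 : finrank ℝ (span ℝ {u}) ≤ 1 := by simpa using finrank_span_le_card (R := ℝ) ({u} : Set E)
  rw [h] at h1
  omega

/-- Two points `x`, `y` are joined by a broken line through a point avoiding every `W ⊔ ℝx` and
`W ⊔ ℝy`. -/
lemma isPreconnected_sdiff_biUnion (H : Submodule ℝ E) {G : Set (Submodule ℝ E)}
    (hG : G.Finite) (hle : ∀ W ∈ G, W ≤ H) (hcodim : ∀ W ∈ G, finrank ℝ W + 1 < finrank ℝ H) :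
    IsPreconnected ((H : Set E) \ ⋃ W ∈ G, (W : Set E)) := by
  refine isPreconnected_of_forall_pair fun x hx y hy => ?_
  set G' := (fun W => W ⊔ span ℝ {x}) '' G ∪ (fun W => W ⊔ span ℝ {y}) '' G
  have hG'lt : ∀ W' ∈ G', W' < H := by
    rintro _ (⟨W, hW, rfl⟩ | ⟨W, hW, rfl⟩)
    exacts [sup_span_singleton_lt (hle W hW) hx.1 (hcodim W hW),
      sup_span_singleton_lt (hle W hW) hy.1 (hcodim W hW)]
  obtain ⟨z, hzH, hzG'⟩ : ((H : Set E) \ ⋃ W' ∈ G', (W' : Set E)).Nonempty :=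
    closure_nonempty_iff.1 ⟨0, subset_closure_sdiff_biUnion H ((hG.image _).union (hG.image _))
      hG'lt H.zero_mem⟩
  simp only [mem_iUnion, not_exists] at hzG'
  refine ⟨segment ℝ x z ∪ segment ℝ z y, union_subset ?_ ?_, Or.inl (left_mem_segment ℝ x z),
    Or.inr (right_mem_segment ℝ z y), (convex_segment x z).isPreconnected.union z
      (right_mem_segment ℝ x z) (left_mem_segment ℝ z y) (convex_segment z y).isPreconnected⟩
  · exact segment_subset_sdiff_biUnion hx hzH fun W hW => hzG' _ (Or.inl ⟨W, hW, rfl⟩)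
  · rw [segment_symm]
    exact segment_subset_sdiff_biUnion hy hzH fun W hW => hzG' _ (Or.inr ⟨W, hW, rfl⟩)

end AvoidSubspaces

section Codimension

variable {V : Type*} [AddCommGroup V] [Module ℝ V]

lemma Submodule.eq_or_eq_of_finrank_eq_succ {E W H : Submodule ℝ V} [FiniteDimensional ℝ H]
    (hEW : E ≤ W) (hWH : W ≤ H) (hEH : finrank ℝ E + 1 = finrank ℝ H) : W = E ∨ W = H := by
  have : FiniteDimensional ℝ W := Submodule.finiteDimensional_of_le hWH
  rcases hEW.eq_or_lt with rfl | hlt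
  · exact Or.inl rfl
  · have := finrank_lt_finrank_of_lt hlt
    exact Or.inr (eq_of_le_of_finrank_le hWH (by have := finrank_mono hWH; omega))

lemma exists_linearMap_sub_smul_mem {E H : Submodule ℝ V} [FiniteDimensional ℝ H]
    (hEH : E ≤ H) (hrank : finrank ℝ E + 1 = finrank ℝ H) {u : V} (hu : u ∈ H) (huE : u ∉ E) :
    ∃ φ : V →ₗ[ℝ] ℝ, φ u = 1 ∧ (∀ e ∈ E, φ e = 0) ∧ ∀ z ∈ H, z - φ z • u ∈ E := by
  obtain ⟨φ, hφE, hφu⟩ := LinearMap.exists_extend_of_notMem (0 : E →ₗ[ℝ] ℝ) huE 1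
  have hφE' : ∀ e ∈ E, φ e = 0 := fun e he => congr($hφE ⟨e, he⟩)
  have hsup : E ⊔ span ℝ {u} = H := by
    refine (Submodule.eq_or_eq_of_finrank_eq_succ le_sup_left
      (sup_le hEH (span_le.2 (singleton_subset_iff.2 hu))) hrank).resolve_left fun h => huE ?_
    exact h ▸ mem_sup_right (mem_span_singleton_self u)
  refine ⟨φ, hφu, hφE', fun z hz => ?_⟩
  rw [← hsup] at hz
  obtain ⟨e, he, w, hw, rfl⟩ := mem_sup.1 hz
  obtain ⟨t, rfl⟩ := mem_span_singleton.1 hw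
  simpa [hφE' e he, hφu] using he

end Codimension

lemma exists_add_mem_of_mkQ_image_eq_neg {V : Type*} [AddCommGroup V] [Module ℝ V]
    {E : Submodule ℝ V} {s t : Set V} (h : E.mkQ '' t = -(E.mkQ '' s)) {b : V} (hb : b ∈ s) :
    ∃ a ∈ t, a + b ∈ E := by
  obtain ⟨a, ha, hab⟩ : -E.mkQ b ∈ E.mkQ '' t := h ▸ neg_mem_neg.2 (mem_image_of_mem _ hb)
  refine ⟨a, ha, (Quotient.mk_eq_zero E).1 ?_⟩
  simpa [eq_neg_iff_add_eq_zero] using hab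

section HalfBall

variable {E : Type*} [NormedAddCommGroup E] [NormedSpace ℝ E] [FiniteDimensional ℝ E]

lemma exists_halfBall_subset {δ η : Set E} {H : Submodule ℝ E} {u y : E} {φ : E →ₗ[ℝ] ℝ}
    (hy : y ∈ Relint δ) (hφy : φ y = 0) (hproj : ∀ z ∈ H, z - φ z • u ∈ span ℝ δ)
    (hcone : ∀ x ∈ δ, ∀ t : ℝ, 0 ≤ t → x + t • u ∈ η) :
    ∃ ε > 0, ∀ z ∈ H, dist z y < ε → 0 ≤ φ z → z ∈ η := by
  obtain ⟨-, ε₀, hε₀, hball⟩ := hy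
  have hcont : Continuous fun z => z - φ z • u := by
    have := φ.continuous_of_finiteDimensional
    fun_prop
  obtain ⟨ε, hε, hclose⟩ := Metric.continuousAt_iff.1 hcont.continuousAt ε₀ hε₀
  refine ⟨ε, hε, fun z hz hzy hφz => ?_⟩
  have hδ : z - φ z • u ∈ δ := hball _ (hproj z hz) (by simpa [hφy] using hclose hzy)
  simpa using hcone _ hδ _ hφz

end HalfBall

namespace IsFan

variable {r : ℕ} {N : AddSubgroup (Vr r)} {F : Set (Set (Vr r))}

/-- Central symmetry of `Star(δ)` provides a cone `η'` on the other side of `span δ`; near `y`,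
`H` is covered by `η ∪ η'`. -/
lemma exists_ball_subset_of_cSymm (hfan : IsFan N F) {H : Submodule ℝ (Vr r)}
    {η δ : Set (Vr r)} (hη : η ∈ F) (hηH : span ℝ η = H) (hδη : δ ⊆ η)
    (hrank : finrank ℝ (span ℝ δ) + 1 = finrank ℝ H) (hsym : CSymm (starAt F δ (span ℝ δ)))
    {y : Vr r} (hy : y ∈ Relint δ) :
    ∃ ε > 0, ∀ z ∈ H, dist z y < ε → ∃ η' ∈ F, span ℝ η' = H ∧ z ∈ η' := by
  set E := span ℝ δ
  have hEH : E ≤ H := hηH ▸ span_mono hδη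
  obtain ⟨u, hu, huE⟩ : ∃ u ∈ η, u ∉ E := by
    by_contra! h
    have := finrank_mono (hηH ▸ span_le.2 h : H ≤ E)
    omega
  have huH : u ∈ H := hηH ▸ subset_span hu
  obtain ⟨η', hη', hδη', hneg⟩ := hsym _ ⟨η, hη, hδη, rfl⟩
  obtain ⟨u', hu', huu'⟩ := exists_add_mem_of_mkQ_image_eq_neg hneg.symm hu
  have hη'H : η' ⊆ H := fun a ha => by
    obtain ⟨b, hb, hab⟩ := exists_add_mem_of_mkQ_image_eq_neg (neg_eq_iff_eq_neg.1 hneg) ha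
    have := sub_mem (hEH hab) (hηH ▸ subset_span hb : b ∈ H)
    rwa [add_sub_cancel_left] at this
  have hu'E : u' ∉ E := fun h => huE (by simpa using sub_mem huu' h)
  have hη'span : span ℝ η' = H :=
    (Submodule.eq_or_eq_of_finrank_eq_succ (span_mono hδη') (span_le.2 hη'H) hrank).resolve_left
      fun h => hu'E (h.le (subset_span hu'))
  obtain ⟨φ, hφu, hφE, hproj⟩ := exists_linearMap_sub_smul_mem hEH hrank huH huE
  have hφy : φ y = 0 := hφE y (subset_span hy.1)
  have hproj' : ∀ z ∈ H, z - (-φ) z • u' ∈ E := fun z hz => by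
    convert add_mem (hproj z hz) (smul_mem _ (φ z) huu') using 1
    simp only [LinearMap.neg_apply, neg_smul, smul_add]
    abel
  obtain ⟨ε₁, hε₁, h₁⟩ := exists_halfBall_subset hy hφy hproj
    fun x hx t ht => hfan.add_smul_mem hη (hδη hx) hu ht
  obtain ⟨ε₂, hε₂, h₂⟩ := exists_halfBall_subset hy (by simpa using hφy) hproj'
    fun x hx t ht => hfan.add_smul_mem hη' (hδη' hx) hu' ht
  refine ⟨min ε₁ ε₂, lt_min hε₁ hε₂, fun z hz hzy => ?_⟩
  rcases le_total 0 (φ z) with hφz | hφz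
  · exact ⟨η, hη, hηH, h₁ z hz (hzy.trans_le (min_le_left _ _)) hφz⟩
  · exact ⟨η', hη', hη'span, h₂ z hz (hzy.trans_le (min_le_right _ _)) (by simpa using hφz)⟩

lemma exists_ball_subset_of_forall_notMem_span (hfan : IsFan N F) {H : Submodule ℝ (Vr r)}
    (hstar : ∀ δ ∈ F, finrank ℝ (span ℝ δ) + 1 = finrank ℝ H → CSymm (starAt F δ (span ℝ δ)))
    {η : Set (Vr r)} (hη : η ∈ F) (hηH : span ℝ η = H) {y : Vr r} (hy : y ∈ η)
    (hthin : ∀ γ ∈ F, γ ⊆ H → finrank ℝ (span ℝ γ) + 1 < finrank ℝ H → y ∉ span ℝ γ) :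
    ∃ ε > 0, ∀ z ∈ H, dist z y < ε → ∃ η' ∈ F, span ℝ η' = H ∧ z ∈ η' := by
  obtain ⟨δ, hδ, hδη, hyδ⟩ := hfan.exists_mem_relint hη hy
  have hδH : span ℝ δ ≤ H := hηH ▸ span_mono hδη
  have hle := finrank_mono hδH
  rcases lt_trichotomy (finrank ℝ (span ℝ δ) + 1) (finrank ℝ H) with hlt | heq | hgt
  · exact absurd (subset_span hyδ.1) (hthin δ hδ (span_le.1 hδH) hlt)
  · exact hfan.exists_ball_subset_of_cSymm hη hηH hδη heq (hstar δ hδ heq) hyδ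
  · have hδspan : span ℝ δ = H := eq_of_le_of_finrank_le hδH (by omega)
    obtain ⟨-, ε, hε, hball⟩ := hyδ
    exact ⟨ε, hε, fun z hz hzy => ⟨δ, hδ, hδspan, hball z (hδspan ▸ hz) hzy⟩⟩

lemma subset_sUnion_span_eq (hfan : IsFan N F) {H : Submodule ℝ (Vr r)}
    (hstar : ∀ δ ∈ F, finrank ℝ (span ℝ δ) + 1 = finrank ℝ H → CSymm (starAt F δ (span ℝ δ)))
    {τ : Set (Vr r)} (hτ : τ ∈ F) (hτH : span ℝ τ = H) :
    (H : Set (Vr r)) ⊆ ⋃₀ {η ∈ F | span ℝ η = H} := by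
  have hU : IsClosed (⋃₀ {η ∈ F | span ℝ η = H}) := by
    rw [sUnion_eq_biUnion]
    exact (hfan.finite.subset fun η hη => hη.1).isClosed_biUnion fun η hη => hfan.isClosed hη.1
  set U := ⋃₀ {η ∈ F | span ℝ η = H}
  set G := span ℝ '' {γ ∈ F | γ ⊆ H ∧ finrank ℝ (span ℝ γ) + 1 < finrank ℝ H}
  have hG : G.Finite := (hfan.finite.subset fun γ hγ => hγ.1).image _
  have hGH : ∀ W ∈ G, W ≤ H := by
    rintro _ ⟨γ, hγ, rfl⟩
    exact span_le.2 hγ.2.1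
  have hGcodim : ∀ W ∈ G, finrank ℝ W + 1 < finrank ℝ H := by
    rintro _ ⟨γ, hγ, rfl⟩
    exact hγ.2.2
  set P := (H : Set (Vr r)) \ ⋃ W ∈ G, (W : Set (Vr r))
  have hHP : (H : Set (Vr r)) ⊆ closure P :=
    subset_closure_sdiff_biUnion H hG fun W hW => (hGH W hW).lt_of_ne fun h => by
      have := hGcodim W hW
      rw [h] at this
      omega
  have hPU : P ⊆ U := by
    refine (isPreconnected_sdiff_biUnion H hG hGH hGcodim).subset_of_isClosed_of_forall_ball
      hU ?_ ?_
    · obtain ⟨p, hpτ, ε, hε, hball⟩ := hfan.relint_nonempty hτ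
      obtain ⟨q, hqP, hqp⟩ := Metric.mem_closure_iff.1 (hHP (hτH ▸ subset_span hpτ)) ε hε
      exact ⟨q, hqP, τ, ⟨hτ, hτH⟩, hball q (hτH ▸ hqP.1) (by rwa [dist_comm])⟩
    · rintro y ⟨hyP, η, ⟨hη, hηH⟩, hyη⟩
      obtain ⟨ε, hε, hball⟩ := hfan.exists_ball_subset_of_forall_notMem_span hstar hη hηH hyη
        fun γ hγ hγH hγdim hyγ => hyP.2 (mem_biUnion ⟨γ, ⟨hγ, hγH, hγdim⟩, rfl⟩ hyγ)
      exact ⟨ε, hε, fun z hz hzy =>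
        let ⟨η', hη', hη'H, hzη'⟩ := hball z hz.1 hzy
        ⟨η', ⟨hη', hη'H⟩, hzη'⟩⟩
  exact hHP.trans (hU.closure_subset_iff.2 hPU)

end IsFan

theorem stmt6_general {r : ℕ} (N : AddSubgroup (Vr r)) (F : Set (Set (Vr r)))
    (hfan : IsFan N F)
    (hstar : ∀ δ ∈ F, spanDim δ = r - 2 → CSymm (starAt F δ (Submodule.span ℝ δ))) :
    ∀ τ ∈ F, spanDim τ = r - 1 →
      (↑(Submodule.span ℝ τ) : Set (Vr r)) ⊆ ⋃₀ {η ∈ F | spanDim η = r - 1} := by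
  intro τ hτ hτdim
  have hstar' : ∀ δ ∈ F, finrank ℝ (span ℝ δ) + 1 = finrank ℝ (span ℝ τ) →
      CSymm (starAt F δ (span ℝ δ)) := fun δ hδ hrank =>
    hstar δ hδ (by unfold spanDim at hτdim ⊢; omega)
  refine (hfan.subset_sUnion_span_eq hstar' hτ rfl).trans (sUnion_mono fun η hη => ?_)
  exact ⟨hη.1, by rw [spanDim, hη.2]; exact hτdim⟩

/-- if all stars of `(r-2)`-dimensional cones of a complete fan are
centrally symmetric, then the fan is strongly symmetric: the span of every
`(r-1)`-dimensional cone is contained in the support of `Σ(r-1)`. -/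
theorem stmt6 {r : ℕ} (N : AddSubgroup (Vr r)) (F : Set (Set (Vr r)))
    (hN : IsLattice N) (hfan : IsFan N F) (hcomp : FanComplete F)
    (hstar : ∀ δ ∈ F, spanDim δ = r - 2 → CSymm (starAt F δ (Submodule.span ℝ δ))) :
    ∀ τ ∈ F, spanDim τ = r - 1 →
      (↑(Submodule.span ℝ τ) : Set (Vr r)) ⊆ ⋃₀ {η ∈ F | spanDim η = r - 1} :=
  stmt6_general N F hfan hstar
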